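/- Let M be a graded A_n(K)-module, f ∈ R a homogeneous polynomial, and z a homogeneous element of the localization M_f. Then for every integer a ≥ 1, (ℰ_n − |z| + |f|)^a (z/f) = (1/f)(ℰ_n − |z|)^a z in M_f. -/
import Mathlib

/-! ### The Weyl algebra `A_n(K)` as a quotient of the free algebra. -/

/-- The defining relations of the `n`-th Weyl algebra: the `X_i` commute, the `∂_i` commute,
and `∂_i X_j = X_j ∂_i + δ_{ij}`. -/
inductive WeylRel (K : Type) [Field K] (n : ℕ) :
    FreeAlgebra K (Fin n ⊕ Fin n) → FreeAlgebra K (Fin n ⊕ Fin n) → Prop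
  | xx (i j : Fin n) : WeylRel K n
      (FreeAlgebra.ι K (Sum.inl i) * FreeAlgebra.ι K (Sum.inl j))
      (FreeAlgebra.ι K (Sum.inl j) * FreeAlgebra.ι K (Sum.inl i))
  | dd (i j : Fin n) : WeylRel K n
      (FreeAlgebra.ι K (Sum.inr i) * FreeAlgebra.ι K (Sum.inr j))
      (FreeAlgebra.ι K (Sum.inr j) * FreeAlgebra.ι K (Sum.inr i))
  | dx (i j : Fin n) : WeylRel K n
      (FreeAlgebra.ι K (Sum.inr i) * FreeAlgebra.ι K (Sum.inl j))
      (FreeAlgebra.ι K (Sum.inl j) * FreeAlgebra.ι K (Sum.inr i) + if i = j then 1 else 0)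

/-- The `n`-th Weyl algebra over `K`. -/
abbrev WeylAlgebra (K : Type) [Field K] (n : ℕ) : Type := RingQuot (WeylRel K n)

/-- The variable `X_i` (degree `+1`) in the Weyl algebra. -/
noncomputable def Wx (K : Type) [Field K] {n : ℕ} (i : Fin n) : WeylAlgebra K n :=
  RingQuot.mkAlgHom K (WeylRel K n) (FreeAlgebra.ι K (Sum.inl i))

/-- The partial derivative `∂_i` (degree `-1`) in the Weyl algebra. -/
noncomputable def Wd (K : Type) [Field K] {n : ℕ} (i : Fin n) : WeylAlgebra K n :=
  RingQuot.mkAlgHom K (WeylRel K n) (FreeAlgebra.ι K (Sum.inr i))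

/-- The Euler operator `ℰ_n = ∑ X_i ∂_i`. -/
noncomputable def weylEuler (K : Type) [Field K] (n : ℕ) : WeylAlgebra K n :=
  ∑ i : Fin n, Wx K i * Wd K i

/-- The Euler operator `ℰ_r = ∑_{i < r} X_i ∂_i` of the subalgebra `A_r(K) ⊆ A_n(K)`. -/
noncomputable def weylEulerUpTo (K : Type) [Field K] (n r : ℕ) : WeylAlgebra K n :=
  ∑ i ∈ Finset.univ.filter (fun i : Fin n => (i : ℕ) < r), Wx K i * Wd K i

/-- Monomials of degree `d` in the variables `X_1, …, X_n` inside the Weyl algebra. -/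
def xMonomials (K : Type) [Field K] (n d : ℕ) : Set (WeylAlgebra K n) :=
  {w | ∃ l : List (Fin n), l.length = d ∧ w = (l.map (Wx K)).prod}

/-- `f` is a homogeneous polynomial of degree `d` in `R = K[X_1, …, X_n] ⊆ A_n(K)`. -/
def IsHomogPoly (K : Type) [Field K] {n : ℕ} (f : WeylAlgebra K n) (d : ℕ) : Prop :=
  f ∈ Submodule.span K (xMonomials K n d)

/-! ### Graded (left) modules over the Weyl algebra. -/

/-- A graded left `A_n(K)`-module: a module over the Weyl algebra together with an internal
`ℤ`-grading, stable under `K` and such that `X_i` raises degree by one and `∂_i` lowers it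
by one. -/
structure GWM (K : Type) [Field K] (n : ℕ) where
  carrier : Type
  [acg : AddCommGroup carrier]
  [mod : Module (WeylAlgebra K n) carrier]
  deg : ℤ → AddSubgroup carrier
  isInternal : DirectSum.IsInternal deg
  k_smul : ∀ (c : K) (j : ℤ) (m : carrier), m ∈ deg j →
    algebraMap K (WeylAlgebra K n) c • m ∈ deg j
  x_smul : ∀ (i : Fin n) (j : ℤ) (m : carrier), m ∈ deg j → Wx K i • m ∈ deg (j + 1)
  d_smul : ∀ (i : Fin n) (j : ℤ) (m : carrier), m ∈ deg j → Wd K i • m ∈ deg (j - 1)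

attribute [instance] GWM.acg GWM.mod

instance {K : Type} [Field K] {n : ℕ} : CoeSort (GWM K n) Type := ⟨GWM.carrier⟩

/-- A graded `A_n(K)`-module is *generalized Eulerian* if every homogeneous element `z`
is killed by some power of `ℰ_n - |z|`. -/
def GWM.IsGenEulerian {K : Type} [Field K] {n : ℕ} (M : GWM K n) : Prop :=
  ∀ (j : ℤ) (m : M.carrier), m ∈ M.deg j →
    ∃ a : ℕ, 1 ≤ a ∧ ((weylEuler K n - (j : WeylAlgebra K n)) ^ a) • m = 0

/-- A graded module is concentrated in degree `d` if all other graded pieces vanish. -/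
def GWM.ConcentratedIn {K : Type} [Field K] {n : ℕ} (M : GWM K n) (d : ℤ) : Prop :=
  ∀ j : ℤ, j ≠ d → M.deg j = ⊥


section Aux
variable (K : Type) [Field K] {n : ℕ}

lemma wx_wx (i j : Fin n) : Wx K i * Wx K j = Wx K j * Wx K i := by
  unfold Wx
  rw [← map_mul, ← map_mul, RingQuot.mkAlgHom_rel K (WeylRel.xx i j)]

lemma wd_wx (i j : Fin n) :
    Wd K i * Wx K j = Wx K j * Wd K i + if i = j then 1 else 0 := by
  unfold Wd Wx
  rw [← map_mul, RingQuot.mkAlgHom_rel K (WeylRel.dx i j), map_add, map_mul]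
  split_ifs <;> simp

lemma euler_mul_wx (i : Fin n) :
    weylEuler K n * Wx K i = Wx K i * weylEuler K n + Wx K i := by
  unfold weylEuler
  rw [Finset.sum_mul, Finset.mul_sum]
  have : ∀ j : Fin n, Wx K j * Wd K j * Wx K i =
      Wx K i * (Wx K j * Wd K j) + (if j = i then Wx K j else 0) := by
    intro j
    rw [mul_assoc, wd_wx, mul_add, ← mul_assoc, wx_wx K j i, mul_assoc]
    congr 1
    split_ifs <;> simp
  rw [Finset.sum_congr rfl fun j _ => this j, Finset.sum_add_distrib,
    Finset.sum_ite_eq' Finset.univ i (fun j => Wx K j)]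
  simp

lemma euler_mul_prod (l : List (Fin n)) :
    weylEuler K n * (l.map (Wx K)).prod
      = (l.map (Wx K)).prod * (weylEuler K n + (l.length : WeylAlgebra K n)) := by
  induction l with
  | nil => simp
  | cons i l ih =>
    simp only [List.map_cons, List.prod_cons, List.length_cons]
    rw [← mul_assoc, euler_mul_wx, add_mul, mul_assoc, ih]
    push_cast
    noncomm_ring

lemma euler_mul_homog (f : WeylAlgebra K n) (df : ℕ) (hf : IsHomogPoly K f df) :
    weylEuler K n * f = f * (weylEuler K n + (df : WeylAlgebra K n)) := by
  refine Submodule.span_induction ?_ ?_ ?_ ?_ hf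
  · rintro x ⟨l, hl, rfl⟩
    rw [euler_mul_prod, hl]
  · simp
  · intro x y _ _ hx hy
    rw [mul_add, add_mul, hx, hy]
  · intro c x _ hx
    rw [mul_smul_comm, smul_mul_assoc, hx]

end Aux

/-- Let `M₀` be a graded `A_n(K)`-module, `f ∈ R` a homogeneous polynomial
of degree `|f|`, and `z` a homogeneous element of the localization `M = (M₀)_f` of degree
`|z|`.  Then for every `a ≥ 1` one has `(ℰ_n - |z| + |f|)^a (z/f) = (1/f) (ℰ_n - |z|)^a z`
in `M`.  We formalize the localization by a graded `A_n(K)`-module `M` on which `f` acts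
bijectively; `z/f` is the (unique) element `w` with `f • w = z`, and the displayed identity
is equivalent to `f • ((ℰ_n - |z| + |f|)^a • (z/f)) = (ℰ_n - |z|)^a • z`. -/

theorem localization_euler_identity
    (K : Type) [Field K] [CharZero K] (n : ℕ)
    (M : GWM K n) (f : WeylAlgebra K n) (df : ℕ) (hf : IsHomogPoly K f df)
    (hbij : Function.Bijective fun m : M.carrier => f • m)
    (dz : ℤ) (z : M.carrier) (hz : z ∈ M.deg dz)
    (w : M.carrier) (hw : f • w = z)
    (a : ℕ) (ha : 1 ≤ a) :
    f • (((weylEuler K n - (dz : WeylAlgebra K n) + (df : WeylAlgebra K n)) ^ a) • w) =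
      ((weylEuler K n - (dz : WeylAlgebra K n)) ^ a) • z := by
  have hcomm : (weylEuler K n - (dz : WeylAlgebra K n)) * f
      = f * (weylEuler K n - (dz : WeylAlgebra K n) + (df : WeylAlgebra K n)) := by
    rw [sub_mul, euler_mul_homog K f df hf, Int.cast_comm, mul_add, mul_add, mul_sub]
    abel
  have hpow : ∀ b : ℕ, ((weylEuler K n - (dz : WeylAlgebra K n)) ^ b) * f
      = f * ((weylEuler K n - (dz : WeylAlgebra K n) + (df : WeylAlgebra K n)) ^ b) := by
    intro b
    induction b with
    | zero => simp
    | succ b ih =>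
      rw [pow_succ, pow_succ, mul_assoc, hcomm, ← mul_assoc, ih, mul_assoc]
  rw [← mul_smul, ← hpow a, mul_smul, hw]
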